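/- arXiv:1003.3512 — 7 statements merged into one kernel-verified Lean document; each statement's English description precedes it below -/
import Mathlib

section
/- Let B be a finitely generated projective R-algebra and x ∈ B with deg_R(x) = 2. Then R[x] is a projective R-module if and only if ax ∉ R for every nonzero a ∈ R; in particular this holds whenever 1, x can be extended to an R-module basis of B. -/
/-!
`R[x] = R ∙ 1 + R ∙ x` is the image of `φ : R² → B`, `(a, b) ↦ a + b x`, and `φ` is injective
exactly when no `a ≠ 0` has `a x ∈ R`; in that case `R[x] ≅ R²` is free. Conversely, if `R[x]` is
projective, then `π = 1 - s ∘ φ`, for a section `s` of `φ`, is an idempotent endomorphism of `R²`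
with image `ker φ`. Since `x² ∈ R + R x`, every relation `a + b x = 0` gives `a x, b x ∈ R`, so the
entries of `π` lie in the ideal `J = {c | c x ∈ R}`, which is proper because `x ∉ R`. Hence
`det (1 - π)` is an idempotent congruent to `1` modulo `J`; on a connected ring it equals `1`, so
`1 - π` is an invertible idempotent, `π = 0`, and `φ` is injective.
-/

/-- `x` satisfies a monic polynomial of degree `n` over `R`. -/
def SatisfiesMonicDeg (R : Type*) {B : Type*} [CommRing R] [Ring B] [Algebra R B]
    (x : B) (n : ℕ) : Prop :=
  ∃ f : Polynomial R, f.Monic ∧ f.natDegree = n ∧ Polynomial.aeval x f = 0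

/-- The degree of `x` over `R`. -/
noncomputable def elemDeg (R : Type*) {B : Type*} [CommRing R] [Ring B] [Algebra R B]
    (x : B) : ℕ :=
  sInf {n | 0 < n ∧ SatisfiesMonicDeg R x n}

section Connected

variable {R : Type*} [CommRing R] (hconn : ∀ e : R, IsIdempotentElem e → e = 0 ∨ e = 1)
include hconn

theorem Matrix.eq_zero_of_isIdempotentElem_of_forall_mem {n : Type*} [Fintype n] [DecidableEq n]
    {J : Ideal R} (hJ : J ≠ ⊤) {M : Matrix n n R} (hM : IsIdempotentElem M)
    (hMJ : ∀ i j, M i j ∈ J) : M = 0 := by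
  have hdet_mod : Ideal.Quotient.mk J (1 - M).det = 1 := by
    have hM0 : (Ideal.Quotient.mk J).mapMatrix M = 0 := by
      ext i j
      exact Ideal.Quotient.eq_zero_iff_mem.2 (hMJ i j)
    rw [RingHom.map_det, map_sub, map_one, hM0, sub_zero, Matrix.det_one]
  have hdet : (1 - M).det = 1 := by
    refine (hconn _ (hM.one_sub.map Matrix.detMonoidHom)).resolve_left fun h0 => hJ ?_
    rw [Ideal.Quotient.mk_eq_one_iff_sub_mem, show (1 - M).det = 0 from h0, zero_sub] at hdet_mod
    exact (Ideal.eq_top_iff_one J).2 (by simpa using J.neg_mem hdet_mod)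
  have hunit : IsUnit (1 - M) := (Matrix.isUnit_iff_isUnit_det _).2 (hdet ▸ isUnit_one)
  simpa using (IsIdempotentElem.iff_eq_one_of_isUnit hunit).1 hM.one_sub

theorem LinearMap.injective_of_surjective_of_forall_mem_ker {ι P : Type*} [Fintype ι]
    [DecidableEq ι] [AddCommGroup P] [Module R P] [Module.Projective R P]
    {f : (ι → R) →ₗ[R] P} (hf : Function.Surjective f) {J : Ideal R} (hJ : J ≠ ⊤)
    (hker : ∀ v ∈ LinearMap.ker f, ∀ i, v i ∈ J) : Function.Injective f := by
  obtain ⟨s, hs⟩ := Module.projective_lifting_property f LinearMap.id hf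
  set π : Module.End R (ι → R) := 1 - s ∘ₗ f
  have hπker : ∀ v, π v ∈ LinearMap.ker f := fun v => by
    simp [π, ← LinearMap.comp_apply f s, hs]
  have hπ_fix : ∀ v ∈ LinearMap.ker f, π v = v := fun v hv => by
    simp [π, LinearMap.mem_ker.1 hv]
  have hπ : IsIdempotentElem π := LinearMap.ext fun v => hπ_fix _ (hπker v)
  have hπ0 : π = 0 := by
    apply LinearMap.toMatrixAlgEquiv'.injective
    rw [map_zero]
    refine Matrix.eq_zero_of_isIdempotentElem_of_forall_mem hconn hJ
      (hπ.map LinearMap.toMatrixAlgEquiv') fun i j => ?_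
    rw [LinearMap.toMatrixAlgEquiv'_apply]
    exact hker _ (hπker _) i
  rw [← LinearMap.ker_eq_bot, eq_bot_iff]
  intro v hv
  rw [← hπ_fix v hv, hπ0]
  rfl

end Connected

section Quadratic

variable {R B : Type*} [CommRing R] [Ring B] [Algebra R B] {x : B}

theorem linearIndependent_one_pair_iff :
    LinearIndependent R ![1, x] ↔ ∀ a : R, a ≠ 0 → a • x ∉ (algebraMap R B).range := by
  rw [LinearIndependent.pair_iff]
  constructor
  · rintro h a ha ⟨r, hr⟩
    refine ha (h (-r) a ?_).2
    rw [neg_smul, ← hr, Algebra.algebraMap_eq_smul_one, neg_add_cancel]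
  · intro h s t hst
    obtain rfl : t = 0 := by
      by_contra ht
      exact h t ht ⟨-s, by
        rw [map_neg, Algebra.algebraMap_eq_smul_one, eq_neg_of_add_eq_zero_right hst]⟩
    rw [zero_smul, add_zero] at hst
    refine ⟨by_contra fun hs => h s hs ⟨0, ?_⟩, rfl⟩
    rw [map_zero, ← one_mul x, ← smul_mul_assoc, hst, zero_mul]

theorem mem_range_linearCombination_one_pair_iff {y : B} :
    y ∈ LinearMap.range (Fintype.linearCombination R ![1, x]) ↔ ∃ a b : R, a • 1 + b • x = y := by
  rw [Fintype.range_linearCombination, Matrix.range_cons_cons_empty, Submodule.mem_span_pair]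

variable {p q : R} (hx : x * x = p • x + q • 1)
include hx

theorem toSubmodule_adjoin_eq_range_linearCombination_of_mul_self_eq :
    Subalgebra.toSubmodule (Algebra.adjoin R {x}) =
      LinearMap.range (Fintype.linearCombination R ![1, x]) := by
  apply le_antisymm
  · rw [Algebra.adjoin_eq_span, Submodule.span_le]
    intro y hy
    obtain ⟨n, rfl⟩ := Submonoid.mem_closure_singleton.1 hy
    clear hy
    simp only [SetLike.mem_coe, mem_range_linearCombination_one_pair_iff]
    induction n with
    | zero => exact ⟨1, 0, by simp⟩
    | succ n ih =>
      obtain ⟨a, b, hab⟩ := ih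
      refine ⟨b * q, a + b * p, ?_⟩
      rw [pow_succ, ← hab, add_mul, smul_mul_assoc, smul_mul_assoc, one_mul, hx]
      module
  · intro y hy
    obtain ⟨a, b, rfl⟩ := mem_range_linearCombination_one_pair_iff.1 hy
    exact add_mem (Subalgebra.smul_mem _ (one_mem _) a)
      (Subalgebra.smul_mem _ (Algebra.self_mem_adjoin_singleton R x) b)

theorem smul_mem_range_of_mem_ker_linearCombination {v : Fin 2 → R}
    (hv : v ∈ LinearMap.ker (Fintype.linearCombination R ![1, x])) :
    ∀ i, v i • x ∈ (algebraMap R B).range := by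
  have hv : v 0 • 1 + v 1 • x = 0 := by
    simpa [Fintype.linearCombination_apply, Fin.sum_univ_two] using hv
  rw [Fin.forall_fin_two]
  constructor
  · refine ⟨p * v 0 - v 1 * q, ?_⟩
    have hvx : v 0 • x + v 1 • (x * x) = 0 := by
      simpa [add_mul, smul_mul_assoc] using congrArg (· * x) hv
    rw [hx] at hvx
    rw [Algebra.algebraMap_eq_smul_one]
    linear_combination (norm := module) p • hv - hvx
  · exact ⟨-v 0, by rw [map_neg, Algebra.algebraMap_eq_smul_one, eq_neg_of_add_eq_zero_right hv]⟩

variable (hconn : ∀ e : R, IsIdempotentElem e → e = 0 ∨ e = 1) (hxR : x ∉ (algebraMap R B).range)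
include hconn hxR

theorem projective_range_linearCombination_iff_linearIndependent :
    Module.Projective R (LinearMap.range (Fintype.linearCombination R ![1, x])) ↔
      LinearIndependent R ![1, x] := by
  rw [linearIndependent_iff_injective_fintypeLinearCombination]
  refine ⟨fun _ => ?_, fun hinj => .of_equiv (LinearEquiv.ofInjective _ hinj)⟩
  let J : Ideal R :=
    (Subalgebra.toSubmodule (⊥ : Subalgebra R B)).comap (LinearMap.toSpanSingleton R B x)
  have hJ : J ≠ ⊤ := fun h => hxR <| by
    simpa [J, Algebra.mem_bot] using (h ▸ Submodule.mem_top : (1 : R) ∈ J)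
  have hker : ∀ v ∈ LinearMap.ker (Fintype.linearCombination R ![1, x]).rangeRestrict,
      ∀ i, v i ∈ J := by
    intro v hv i
    rw [LinearMap.ker_rangeRestrict] at hv
    simpa [J, Algebra.mem_bot] using smul_mem_range_of_mem_ker_linearCombination hx hv i
  exact (LinearMap.injective_codRestrict_iff _).1 <|
    LinearMap.injective_of_surjective_of_forall_mem_ker hconn
      (LinearMap.surjective_rangeRestrict _) hJ hker

theorem projective_adjoin_iff_linearIndependent :
    Module.Projective R (Algebra.adjoin R {x}) ↔ LinearIndependent R ![1, x] := by
  let e : Algebra.adjoin R {x} ≃ₗ[R] LinearMap.range (Fintype.linearCombination R ![1, x]) :=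
    (Subalgebra.toSubmoduleEquiv _).symm.trans
      (LinearEquiv.ofEq _ _ (toSubmodule_adjoin_eq_range_linearCombination_of_mul_self_eq hx))
  rw [← projective_range_linearCombination_iff_linearIndependent hx hconn hxR]
  exact ⟨fun _ => .of_equiv e, fun _ => .of_equiv e.symm⟩

end Quadratic

section Degree

variable {R B : Type*} [CommRing R] [Ring B] [Algebra R B] {x : B}

theorem satisfiesMonicDeg_of_elemDeg_eq {n : ℕ} (h : elemDeg R x = n) (hn : 0 < n) :
    SatisfiesMonicDeg R x n :=
  h ▸ (Nat.sInf_mem (Nat.nonempty_of_pos_sInf (h ▸ hn : 0 < elemDeg R x))).2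

theorem SatisfiesMonicDeg.exists_mul_self_eq (h : SatisfiesMonicDeg R x 2) :
    ∃ p q : R, x * x = p • x + q • 1 := by
  obtain ⟨f, hf, hdeg, hfx⟩ := h
  have hlead : f.coeff 2 = 1 := hdeg ▸ hf.coeff_natDegree
  refine ⟨-f.coeff 1, -f.coeff 0, ?_⟩
  rw [Polynomial.aeval_eq_sum_range, hdeg] at hfx
  simp only [Finset.sum_range_succ, Finset.sum_range_zero, hlead, pow_zero, pow_one, sq] at hfx
  linear_combination (norm := module) hfx

theorem SatisfiesMonicDeg.nontrivial {n : ℕ} (h : SatisfiesMonicDeg R x n) (hn : n ≠ 0) :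
    Nontrivial R := by
  obtain ⟨f, -, hf, -⟩ := h
  by_contra hR
  rw [not_nontrivial_iff_subsingleton] at hR
  exact hn (hf ▸ by rw [Subsingleton.elim f 0, Polynomial.natDegree_zero])

theorem notMem_range_of_one_lt_elemDeg (h : 1 < elemDeg R x) : x ∉ (algebraMap R B).range := by
  have := (satisfiesMonicDeg_of_elemDeg_eq rfl (zero_lt_one.trans h)).nontrivial (by omega)
  rintro ⟨c, rfl⟩
  have : elemDeg R (algebraMap R B c) ≤ 1 := Nat.sInf_le
    ⟨one_pos, Polynomial.X - Polynomial.C c, Polynomial.monic_X_sub_C c,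
      Polynomial.natDegree_X_sub_C c, by simp⟩
  omega

end Degree

theorem stmt3_general (R B : Type) [CommRing R] [Ring B] [Algebra R B]
    (hconn : ∀ e : R, IsIdempotentElem e → e = 0 ∨ e = 1)
    (x : B) (hdeg : elemDeg R x = 2) :
    (Module.Projective R (Algebra.adjoin R {x}) ↔
      ∀ a : R, a ≠ 0 → a • x ∉ (algebraMap R B).range) ∧
    ((∃ (ι : Type) (b : Module.Basis ι R B) (i j : ι), i ≠ j ∧ b i = 1 ∧ b j = x) →
      Module.Projective R (Algebra.adjoin R {x})) := by
  obtain ⟨p, q, hx⟩ := (satisfiesMonicDeg_of_elemDeg_eq hdeg two_pos).exists_mul_self_eq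
  have hproj := projective_adjoin_iff_linearIndependent hx hconn
    (notMem_range_of_one_lt_elemDeg (hdeg ▸ one_lt_two))
  refine ⟨hproj.trans linearIndependent_one_pair_iff, ?_⟩
  rintro ⟨ι, b, i, j, hij, hbi, hbj⟩
  refine hproj.2 ?_
  convert b.linearIndependent.comp ![i, j] (injective_pair_iff_ne.2 hij)
  ext k
  fin_cases k <;> simp [hbi, hbj]

/-- For `x ∈ B` of degree `2`, the subalgebra `R[x]` is projective as an `R`-module if and only
if `a • x ∉ R` for every nonzero `a ∈ R`; in particular this holds whenever `1, x` belong to an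
`R`-module basis of `B`. -/
theorem stmt3 (R B : Type) [CommRing R] [IsNoetherianRing R] [Ring B] [Algebra R B]
    [Module.Finite R B] [Module.Projective R B]
    (hconn : ∀ e : R, IsIdempotentElem e → e = 0 ∨ e = 1)
    (x : B) (hdeg : elemDeg R x = 2) :
    (Module.Projective R (Algebra.adjoin R {x}) ↔
      ∀ a : R, a ≠ 0 → a • x ∉ (algebraMap R B).range) ∧
    ((∃ (ι : Type) (b : Module.Basis ι R B) (i j : ι), i ≠ j ∧ b i = 1 ∧ b j = x) →
      Module.Projective R (Algebra.adjoin R {x})) :=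
  stmt3_general R B hconn x hdeg
end

section
/- For a finitely generated projective R-algebra B and x ∈ B, the function Spec R → Z sending a prime p to deg_{R_p}(x ⊗ 1 ∈ B_p) is lower semicontinuous: if q ⊇ p are primes of R, then deg_{R_q}(x) ≥ deg_{R_p}(x). -/
open TensorProduct

lemma satisfies_map_aux {S S' A A' : Type*} [CommRing S] [CommRing S'] [Ring A] [Ring A']
    [Algebra S A] [Algebra S' A'] [Nontrivial S'] (φ : S →+* S') (ψ : A →+* A')
    (h : (ψ.comp (algebraMap S A)) = (algebraMap S' A').comp φ) (y : A) (n : ℕ)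
    (hn : SatisfiesMonicDeg S y n) : SatisfiesMonicDeg S' (ψ y) n := by
  obtain ⟨f, hm, hd, hf⟩ := hn
  refine ⟨f.map φ, hm.map φ, by rw [hm.natDegree_map]; exact hd, ?_⟩
  have : Polynomial.aeval (ψ y) (f.map φ) = ψ (Polynomial.aeval y f) := by
    rw [Polynomial.aeval_def, Polynomial.aeval_def, Polynomial.eval₂_map,
      Polynomial.hom_eval₂, h]
  rw [this, hf, map_zero]

/-- Lower semicontinuity of the degree of `x ∈ B`: if `q ⊇ p` are primes of `R`, then the
degree of (the image of) `x` over `R_q` is at least its degree over `R_p`. -/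
theorem stmt4 (R B : Type) [CommRing R] [IsNoetherianRing R] [Ring B] [Algebra R B]
    [Module.Finite R B] [Module.Projective R B] (x : B)
    (p q : Ideal R) (hp : p.IsPrime) (hq : q.IsPrime) (hpq : p ≤ q) :
    haveI := hp; haveI := hq
    elemDeg (Localization.AtPrime p)
        ((1 : Localization.AtPrime p) ⊗ₜ[R] x : (Localization.AtPrime p) ⊗[R] B) ≤
      elemDeg (Localization.AtPrime q)
        ((1 : Localization.AtPrime q) ⊗ₜ[R] x : (Localization.AtPrime q) ⊗[R] B) := by
  haveI := hp; haveI := hq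
  haveI : Nontrivial R := by
    by_contra h
    rw [not_nontrivial_iff_subsingleton] at h
    exact hp.ne_top (Subsingleton.elim _ _)
  set Lp := Localization.AtPrime p
  set Lq := Localization.AtPrime q
  -- the set over Lq is nonempty
  have hint : IsIntegral R x := Algebra.IsIntegral.isIntegral x
  obtain ⟨f, hfm, hf0⟩ := hint
  have hSq : ∃ n, 0 < n ∧ SatisfiesMonicDeg Lq ((1 : Lq) ⊗ₜ[R] x) n := by
    refine ⟨f.natDegree + 1, Nat.succ_pos _, ?_⟩
    have h2 : SatisfiesMonicDeg R x (f.natDegree + 1) := by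
      refine ⟨f * Polynomial.X, hfm.mul Polynomial.monic_X, ?_, ?_⟩
      · rw [Polynomial.natDegree_mul' (by simp [hfm.leadingCoeff]), Polynomial.natDegree_X]
      · rw [map_mul, Polynomial.aeval_def, hf0, zero_mul]
    have := satisfies_map_aux (algebraMap R Lq)
      (Algebra.TensorProduct.includeRight : B →ₐ[R] Lq ⊗[R] B).toRingHom
      (by ext r; simp [Algebra.TensorProduct.algebraMap_apply,
        Algebra.algebraMap_eq_smul_one, TensorProduct.smul_tmul]) x _ h2
    simpa using this
  -- transport from Lq to Lp
  have hle : q.primeCompl ≤ Submonoid.comap (RingHom.id R) p.primeCompl :=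
    fun r hr hmem => hr (hpq hmem)
  let φ : Lq →+* Lp := IsLocalization.map (Localization.AtPrime p) (RingHom.id R) hle
  have hφcom : ∀ r : R, φ (algebraMap R Lq r) = algebraMap R Lp r := by
    intro r
    exact (IsLocalization.map_eq hle r).trans (by simp)
  let φa : Lq →ₐ[R] Lp := AlgHom.mk' φ (by
    intro c y
    simp [Algebra.smul_def, map_mul, hφcom])
  let ψ : Lq ⊗[R] B →ₐ[R] Lp ⊗[R] B :=
    Algebra.TensorProduct.map φa (AlgHom.id R B)
  have key : ∀ n, SatisfiesMonicDeg Lq ((1 : Lq) ⊗ₜ[R] x) n →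
      SatisfiesMonicDeg Lp ((1 : Lp) ⊗ₜ[R] x) n := by
    intro n hn
    have := satisfies_map_aux φ ψ.toRingHom (by
      ext s
      simp [ψ, Algebra.TensorProduct.algebraMap_apply, φa]) _ n hn
    simpa [ψ, φa, map_one] using this
  -- conclude
  unfold elemDeg
  have hne : {n | 0 < n ∧ SatisfiesMonicDeg Lq ((1 : Lq) ⊗ₜ[R] x) n}.Nonempty := hSq
  have hmem := Nat.sInf_mem hne
  exact Nat.sInf_le ⟨hmem.1, key _ hmem.2⟩
end

section
/- Let F be a field and B a finite étale (i.e., finite product of finite separable field extensions) commutative F-algebra of dimension n with #F ≥ n. Then deg_F(B) = n, i.e., there exists an element of B whose minimal polynomial over F has degree n. -/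
open Polynomial Module

/-- Splitting off the first factor of a finite product of algebras. -/
def piSuccAlgEquiv (F : Type) [CommSemiring F] (k : ℕ) (K : Fin (k + 1) → Type)
    [∀ i, CommRing (K i)] [∀ i, Algebra F (K i)] :
    (∀ i, K i) ≃ₐ[F] (∀ i : Fin k, K i.succ) × K 0 where
  toFun f := (fun i => f i.succ, f 0)
  invFun p := Fin.cons p.2 p.1
  left_inv f := by
    funext i
    refine Fin.cases ?_ ?_ i <;> simp
  right_inv p := by
    refine Prod.ext ?_ ?_ <;> simp
  map_mul' _ _ := rfl
  map_add' _ _ := rfl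
  commutes' _ := rfl

/-- The key inductive step: if `B` has an element with minimal polynomial of degree
`finrank F B`, and `K/F` is a finite separable field extension, and `F` has at least
`finrank F (B × K)` elements, then `B × K` has an element with minimal polynomial of
degree `finrank F (B × K)`. -/
theorem step_prod (F : Type) {B K : Type} [Field F] [CommRing B] [Algebra F B]
    [Module.Finite F B] [Field K] [Algebra F K] [FiniteDimensional F K]
    [Algebra.IsSeparable F K]
    (hcard : (Module.finrank F (B × K) : Cardinal) ≤ Cardinal.mk F)
    (y : B) (hy : (minpoly F y).natDegree = Module.finrank F B) :
    ∃ x : B × K, (minpoly F x).natDegree = Module.finrank F (B × K) := by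
  obtain ⟨z, hz⟩ := Field.exists_primitive_element F K
  have hyint : IsIntegral F y := IsIntegral.of_finite F y
  have hprod : finrank F (B × K) = finrank F B + finrank F K := Module.finrank_prod
  have hKpos : 0 < finrank F K := Module.finrank_pos
  -- choose a good shift `c`
  have hexc : ∃ c : F, Polynomial.aeval (z + algebraMap F K c) (minpoly F y) ≠ 0 := by
    classical
    by_contra hcon
    push_neg at hcon
    set p := (minpoly F y).map (algebraMap F K) with hp
    have hpne : p ≠ 0 := ((minpoly.monic hyint).map (algebraMap F K)).ne_zero
    set S := p.roots.toFinset with hS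
    have hmem : ∀ c : F, z + algebraMap F K c ∈ S := by
      intro c
      rw [hS, Multiset.mem_toFinset, Polynomial.mem_roots hpne]
      show Polynomial.eval (z + algebraMap F K c) p = 0
      rw [hp, Polynomial.eval_map, ← Polynomial.aeval_def]
      exact hcon c
    have hinj : Function.Injective (fun c : F => (⟨z + algebraMap F K c, hmem c⟩ : S)) := by
      intro a b hab
      have h : z + algebraMap F K a = z + algebraMap F K b := congrArg Subtype.val hab
      exact (algebraMap F K).injective (add_left_cancel h)
    have h1 : Cardinal.mk F ≤ (S.card : Cardinal) :=
      (Cardinal.mk_le_of_injective hinj).trans_eq Cardinal.mk_coe_finset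
    have h2 : S.card ≤ (minpoly F y).natDegree := by
      calc S.card ≤ Multiset.card p.roots := Multiset.toFinset_card_le _
        _ ≤ p.natDegree := p.card_roots'
        _ = (minpoly F y).natDegree := natDegree_map _
    have h3 : (finrank F (B × K) : Cardinal) ≤ (finrank F B : Cardinal) := by
      refine hcard.trans (h1.trans ?_)
      exact_mod_cast Nat.cast_le.mpr (h2.trans_eq hy)
    rw [Nat.cast_le, hprod] at h3
    omega
  obtain ⟨c, hc⟩ := hexc
  set z' := z + algebraMap F K c with hz'def
  have hz'int : IsIntegral F z' := IsIntegral.of_finite F z'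
  have hdz' : (minpoly F z').natDegree = finrank F K := by
    rw [hz'def, minpoly.add_algebraMap z c, natDegree_comp, natDegree_X_sub_C, mul_one]
    exact (Field.primitive_element_iff_minpoly_natDegree_eq F z).mp hz
  have hirr : Irreducible (minpoly F z') := minpoly.irreducible hz'int
  have hndvd : ¬ minpoly F z' ∣ minpoly F y := by
    intro hdvd
    obtain ⟨q, hq⟩ := hdvd
    apply hc
    rw [hq, map_mul, minpoly.aeval, zero_mul]
  have hcop : IsCoprime (minpoly F z') (minpoly F y) := hirr.coprime_iff_not_dvd.mpr hndvd
  refine ⟨(y, z'), ?_⟩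
  have hint : IsIntegral F ((y, z') : B × K) := IsIntegral.of_finite F _
  have haev1 : ∀ q : F[X], Polynomial.aeval y q = (Polynomial.aeval ((y, z') : B × K) q).1 := by
    intro q
    exact Polynomial.aeval_algHom_apply (AlgHom.fst F B K) (y, z') q
  have haev2 : ∀ q : F[X], Polynomial.aeval z' q = (Polynomial.aeval ((y, z') : B × K) q).2 := by
    intro q
    exact Polynomial.aeval_algHom_apply (AlgHom.snd F B K) (y, z') q
  have hd1 : minpoly F ((y, z') : B × K) ∣ minpoly F y * minpoly F z' := by
    apply minpoly.dvd
    have h1 : (Polynomial.aeval ((y, z') : B × K) (minpoly F y * minpoly F z')).1 = 0 := by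
      rw [← haev1, map_mul, minpoly.aeval, zero_mul]
    have h2 : (Polynomial.aeval ((y, z') : B × K) (minpoly F y * minpoly F z')).2 = 0 := by
      rw [← haev2, map_mul, minpoly.aeval, mul_zero]
    exact Prod.ext h1 h2
  have hd2 : minpoly F y * minpoly F z' ∣ minpoly F ((y, z') : B × K) := by
    refine hcop.symm.mul_dvd ?_ ?_
    · apply minpoly.dvd
      rw [haev1, minpoly.aeval, Prod.fst_zero]
    · apply minpoly.dvd
      rw [haev2, minpoly.aeval, Prod.snd_zero]
  have hyne : minpoly F y ≠ 0 := minpoly.ne_zero hyint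
  have hz'ne : minpoly F z' ≠ 0 := minpoly.ne_zero hz'int
  have heq : (minpoly F ((y, z') : B × K)).natDegree = (minpoly F y * minpoly F z').natDegree :=
    le_antisymm (natDegree_le_of_dvd hd1 (mul_ne_zero hyne hz'ne))
      (natDegree_le_of_dvd hd2 (minpoly.ne_zero hint))
  rw [heq, natDegree_mul hyne hz'ne, hy, hdz', hprod]

/-- A finite product of finite separable field extensions of `F` of total dimension at most
`#F` has an element whose minimal polynomial has degree equal to the dimension. -/
theorem pi_primitive (F : Type) [Field F] :
    ∀ (k : ℕ) (K : Fin k → Type) [∀ i, Field (K i)] [∀ i, Algebra F (K i)]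
      [∀ i, FiniteDimensional F (K i)] [∀ i, Algebra.IsSeparable F (K i)],
      (Module.finrank F (∀ i, K i) : Cardinal) ≤ Cardinal.mk F →
      ∃ x : ∀ i, K i, (minpoly F x).natDegree = Module.finrank F (∀ i, K i) := by
  intro k
  induction k with
  | zero =>
    intro K _ _ _ _ _
    haveI : Subsingleton (∀ i : Fin 0, K i) := ⟨fun a b => funext fun i => i.elim0⟩
    refine ⟨0, ?_⟩
    have h0 : finrank F (∀ i : Fin 0, K i) = 0 := finrank_zero_of_subsingleton
    have hdeg : (minpoly F (0 : ∀ i : Fin 0, K i)).degree ≤ 0 := by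
      have := minpoly.min F (0 : ∀ i : Fin 0, K i) monic_one (Subsingleton.elim _ _)
      simpa using this
    rw [h0]
    exact Nat.le_zero.mp (natDegree_le_iff_degree_le.mpr hdeg)
  | succ k ih =>
    intro K instF instA instFD instS hcard
    let e := piSuccAlgEquiv F k K
    have hrank : finrank F (∀ i, K i) = finrank F ((∀ i : Fin k, K i.succ) × K 0) :=
      e.toLinearEquiv.finrank_eq
    have hprod : finrank F ((∀ i : Fin k, K i.succ) × K 0)
        = finrank F (∀ i : Fin k, K i.succ) + finrank F (K 0) := Module.finrank_prod
    have hcard' : (finrank F ((∀ i : Fin k, K i.succ) × K 0) : Cardinal) ≤ Cardinal.mk F := by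
      rwa [hrank] at hcard
    have hcardsub : (finrank F (∀ i : Fin k, K i.succ) : Cardinal) ≤ Cardinal.mk F := by
      refine le_trans ?_ hcard'
      rw [Nat.cast_le, hprod]
      omega
    obtain ⟨y, hy⟩ := ih (fun i => K i.succ) hcardsub
    obtain ⟨x, hx⟩ := step_prod F hcard' y hy
    refine ⟨e.symm x, ?_⟩
    rw [minpoly.algEquiv_eq e.symm x, hx, hrank]

/-- Let `F` be a field and `B` a finite étale commutative `F`-algebra (a finite product of
finite separable field extensions of `F`) of dimension `n`, with `#F ≥ n`.  Then there exists
an element of `B` whose minimal polynomial over `F` has degree `n`, i.e. `deg_F(B) = n`. -/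
theorem stmt7 (F B : Type) [Field F] [CommRing B] [Algebra F B]
    (n : ℕ) (hdim : Module.finrank F B = n) [FiniteDimensional F B]
    (hcard : (n : Cardinal) ≤ Cardinal.mk F)
    (hetale : ∃ (k : ℕ) (K : Fin k → Type) (_ : ∀ i, Field (K i)) (_ : ∀ i, Algebra F (K i)),
      (∀ i, FiniteDimensional F (K i)) ∧ (∀ i, Algebra.IsSeparable F (K i)) ∧
      Nonempty (B ≃ₐ[F] ((i : Fin k) → K i))) :
    ∃ x : B, (minpoly F x).natDegree = n := by
  obtain ⟨k, K, iF, iA, iFD, iS, ⟨e⟩⟩ := hetale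
  have hr : finrank F (∀ i, K i) = n := (e.toLinearEquiv.finrank_eq).symm.trans hdim
  obtain ⟨x, hx⟩ := pi_primitive F k K (by rw [hr]; exact hcard)
  exact ⟨e.symm x, by rw [minpoly.algEquiv_eq e.symm x, hx, hr]⟩
end

section
/- Let B be a finitely generated projective R-algebra generated as an R-module by x_1, …, x_m, and let ξ = a_1 x_1 + ⋯ + a_m x_m ∈ B ⊗_R R[a_1,…,a_m], where R[a_1,…,a_m] is a polynomial ring. Then the geometric degree of B over R equals deg_{R[a_1,…,a_m]}(ξ), and in particular is finite. -/
open TensorProduct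

universe u

/-- The degree of the `R`-algebra `B`. -/
noncomputable def algDeg (R B : Type*) [CommRing R] [Ring B] [Algebra R B] : ℕ :=
  sInf {n | 0 < n ∧ ∀ x : B, SatisfiesMonicDeg R x n}

/-- A bundled commutative `R`-algebra (a base change of `R`). -/
structure RAlg (R : Type u) [CommRing R] : Type (u + 1) where
  carrier : Type u
  [isCommRing : CommRing carrier]
  [isAlgebra : Algebra R carrier]

attribute [instance] RAlg.isCommRing RAlg.isAlgebra

/-- The set of degrees attained by base changes of `B`. -/
noncomputable def gdegSet (R : Type u) [CommRing R] (B : Type u) [Ring B] [Algebra R B] :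
    Set ℕ :=
  {d | ∃ S : RAlg R, algDeg S.carrier (S.carrier ⊗[R] B) = d}

/-- The geometric degree of the `R`-algebra `B`: the supremum of `deg_S(B ⊗_R S)` over all
commutative base changes `R → S`. -/
noncomputable def gdeg (R : Type u) [CommRing R] (B : Type u) [Ring B] [Algebra R B] : ℕ :=
  sSup (gdegSet R B)

section Aux

/-- padding: multiply by X^j -/
lemma sat_pad {S C : Type*} [CommRing S] [Nontrivial S] [Ring C] [Algebra S C] {y : C} {k : ℕ}
    (h : SatisfiesMonicDeg S y k) (j : ℕ) : SatisfiesMonicDeg S y (k + j) := by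
  obtain ⟨f, hm, hd, hev⟩ := h
  refine ⟨f * Polynomial.X ^ j, hm.mul (Polynomial.monic_X_pow j), ?_, ?_⟩
  · rw [hm.natDegree_mul (Polynomial.monic_X_pow j), hd, Polynomial.natDegree_X_pow]
  · rw [map_mul, hev, zero_mul]

lemma algDeg_subsingleton {S C : Type*} [CommRing S] [Subsingleton S] [Ring C] [Algebra S C] :
    algDeg S C = 0 := by
  have h : {n | 0 < n ∧ ∀ c : C, SatisfiesMonicDeg S c n} = ∅ := by
    ext n
    simp only [Set.mem_setOf_eq, Set.mem_empty_iff_false, iff_false, not_and]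
    intro hn h
    obtain ⟨f, _, hdeg, _⟩ := h 0
    rw [Subsingleton.elim f 0, Polynomial.natDegree_zero] at hdeg
    omega
  rw [algDeg, h, Nat.sInf_empty]

lemma rep_aeval {ι : Type*} [Fintype ι] [DecidableEq ι] {R M : Type*} [CommRing R]
    [AddCommGroup M] [Module R M] {b : ι → M} {A : Matrix ι ι R} {f : Module.End R M}
    (h : A.Represents b f) (p : Polynomial R) :
    (Polynomial.aeval A p).Represents b (Polynomial.aeval f p) := by
  induction p using Polynomial.induction_on with
  | C a => simpa using Matrix.Represents.algebraMap (b := b) (M := M) a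
  | add p q hp hq => simpa using hp.add hq
  | monomial n a ih =>
    have e1 : (Polynomial.aeval A) (Polynomial.C a * Polynomial.X ^ (n + 1))
        = (Polynomial.aeval A) (Polynomial.C a * Polynomial.X ^ n) * A := by
      rw [pow_succ, ← mul_assoc, map_mul, Polynomial.aeval_X]
    have e2 : (Polynomial.aeval f) (Polynomial.C a * Polynomial.X ^ (n + 1))
        = (Polynomial.aeval f) (Polynomial.C a * Polynomial.X ^ n) * f := by
      rw [pow_succ, ← mul_assoc, map_mul, Polynomial.aeval_X]
    rw [e1, e2]
    exact ih.mul h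

/-- Cayley–Hamilton with degree control. -/
lemma exists_monic_deg_card {ι : Type*} [Fintype ι] [DecidableEq ι] {R M : Type*} [CommRing R]
    [Nontrivial R] [AddCommGroup M] [Module R M] (b : ι → M)
    (hb : Submodule.span R (Set.range b) = ⊤) (f : Module.End R M) :
    ∃ p : Polynomial R, p.Monic ∧ p.natDegree = Fintype.card ι ∧ Polynomial.aeval f p = 0 := by
  obtain ⟨A, hA⟩ := Matrix.isRepresentation.toEnd_surjective R b hb f
  have hrep : (A : Matrix ι ι R).Represents b f :=
    hA ▸ Matrix.isRepresentation.toEnd_represents R b hb A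
  refine ⟨(A : Matrix ι ι R).charpoly, (A : Matrix ι ι R).charpoly_monic,
    (A : Matrix ι ι R).charpoly_natDegree_eq_dim, ?_⟩
  have h1 := rep_aeval hrep (A : Matrix ι ι R).charpoly
  rw [Matrix.aeval_self_charpoly] at h1
  exact h1.eq hb Matrix.Represents.zero

variable {R B : Type} [CommRing R] [Ring B] [Algebra R B]

/-- Base change of the spanning family spans. -/
lemma span_baseChange {m : ℕ} {x : Fin m → B} (hgen : Submodule.span R (Set.range x) = ⊤)
    (S : Type) [CommRing S] [Algebra R S] :
    Submodule.span S (Set.range fun i => (1 : S) ⊗ₜ[R] x i) = ⊤ := by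
  have h1 : (Submodule.span R (Set.range x)).baseChange S = ⊤ := by
    rw [hgen, Submodule.baseChange_top]
  rw [Submodule.baseChange_span] at h1
  rw [← h1]
  congr 1
  rw [← Set.range_comp]
  rfl

lemma exists_repr {m : ℕ} {x : Fin m → B} (hgen : Submodule.span R (Set.range x) = ⊤)
    (S : Type) [CommRing S] [Algebra R S] (y : S ⊗[R] B) :
    ∃ s : Fin m → S, ∑ i, s i ⊗ₜ[R] x i = y := by
  have hy : y ∈ Submodule.span S (Set.range fun i => (1 : S) ⊗ₜ[R] x i) := by
    rw [span_baseChange hgen S]; trivial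
  obtain ⟨c, hc⟩ := Submodule.mem_span_range_iff_exists_fun S |>.mp hy
  refine ⟨c, ?_⟩
  rw [← hc]
  congr 1
  ext i
  rw [TensorProduct.smul_tmul', smul_eq_mul, mul_one]

/-- uniform bound : every element satisfies a monic polynomial of degree m+1 -/
lemma sat_all {m : ℕ} {x : Fin m → B} (hgen : Submodule.span R (Set.range x) = ⊤)
    (S : Type) [CommRing S] [Algebra R S] [Nontrivial S] (y : S ⊗[R] B) :
    SatisfiesMonicDeg S y (m + 1) := by
  obtain ⟨p, hm, hd, hev⟩ := exists_monic_deg_card (fun i => (1 : S) ⊗ₜ[R] x i)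
    (span_baseChange hgen S) (LinearMap.mulLeft S y)
  have hsat : SatisfiesMonicDeg S y m := by
    refine ⟨p, hm, by simpa using hd, ?_⟩
    have := Polynomial.aeval_algHom_apply (Algebra.lmul S (S ⊗[R] B)) y p
    rw [show Algebra.lmul S (S ⊗[R] B) y = LinearMap.mulLeft S y from rfl, hev] at this
    have h2 := congrArg (fun g : Module.End S (S ⊗[R] B) => g 1) this.symm
    simpa using h2
  exact sat_pad hsat 1

/-- specialization -/
lemma sat_specialize {m : ℕ} {x : Fin m → B} (hgen : Submodule.span R (Set.range x) = ⊤)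
    {n : ℕ}
    (hξ : SatisfiesMonicDeg (MvPolynomial (Fin m) R)
      (∑ i : Fin m, (MvPolynomial.X i : MvPolynomial (Fin m) R) ⊗ₜ[R] x i) n)
    (S : Type) [CommRing S] [Algebra R S] [Nontrivial S] (y : S ⊗[R] B) :
    SatisfiesMonicDeg S y n := by
  obtain ⟨s, hs⟩ := exists_repr hgen S y
  obtain ⟨f, hm, hd, hev⟩ := hξ
  set A := MvPolynomial (Fin m) R
  set φ : A →ₐ[R] S := MvPolynomial.aeval s with hφ
  set Φ : A ⊗[R] B →ₐ[R] S ⊗[R] B := Algebra.TensorProduct.map φ (AlgHom.id R B) with hΦ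
  have hΦξ : Φ.toRingHom (∑ i : Fin m, (MvPolynomial.X i : A) ⊗ₜ[R] x i) = y := by
    show Φ (∑ i : Fin m, (MvPolynomial.X i : A) ⊗ₜ[R] x i) = y
    rw [map_sum, ← hs]
    congr 1
    ext i
    simp only [hΦ, Algebra.TensorProduct.map_tmul, AlgHom.coe_id, id_eq, hφ]
    rw [MvPolynomial.aeval_X]
  refine ⟨f.map φ.toRingHom, hm.map _, by rw [hm.natDegree_map, hd], ?_⟩
  have hcomm : (Φ.toRingHom).comp (algebraMap A (A ⊗[R] B))
      = (algebraMap S (S ⊗[R] B)).comp φ.toRingHom := by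
    refine RingHom.ext fun a => ?_
    show Φ ((algebraMap A (A ⊗[R] B)) a) = (algebraMap S (S ⊗[R] B)) (φ a)
    simp only [Algebra.TensorProduct.algebraMap_apply, Algebra.algebraMap_self, RingHom.id_apply,
      hΦ, Algebra.TensorProduct.map_tmul, map_one, AlgHom.coe_id, id_eq]
  calc Polynomial.aeval y (f.map φ.toRingHom)
      = Polynomial.eval₂ (algebraMap S (S ⊗[R] B)) y (f.map φ.toRingHom) := rfl
    _ = Polynomial.eval₂ ((algebraMap S (S ⊗[R] B)).comp φ.toRingHom) y f :=
        Polynomial.eval₂_map _ _ _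
    _ = Polynomial.eval₂ ((Φ.toRingHom).comp (algebraMap A (A ⊗[R] B))) (Φ.toRingHom
          (∑ i : Fin m, (MvPolynomial.X i : A) ⊗ₜ[R] x i)) f := by rw [← hcomm, hΦξ]
    _ = Φ.toRingHom (Polynomial.eval₂ (algebraMap A (A ⊗[R] B))
          (∑ i : Fin m, (MvPolynomial.X i : A) ⊗ₜ[R] x i) f) :=
        (Polynomial.hom_eval₂ _ _ _ _).symm
    _ = 0 := by
        rw [show Polynomial.eval₂ (algebraMap A (A ⊗[R] B))
          (∑ i : Fin m, (MvPolynomial.X i : A) ⊗ₜ[R] x i) f = Polynomial.aeval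
          (∑ i : Fin m, (MvPolynomial.X i : A) ⊗ₜ[R] x i) f from rfl, hev, map_zero]

end Aux

/-- If `B` is generated as an `R`-module by `x_1, …, x_m` and
`ξ = a_1 x_1 + ⋯ + a_m x_m ∈ B ⊗_R R[a_1, …, a_m]`, then the geometric degree of `B` is
finite and equals `deg_{R[a]}(ξ)`. -/
theorem stmt8 (R B : Type) [CommRing R] [IsNoetherianRing R] [Ring B] [Algebra R B]
    [Module.Finite R B] [Module.Projective R B]
    (hconn : ∀ e : R, IsIdempotentElem e → e = 0 ∨ e = 1)
    (m : ℕ) (x : Fin m → B) (hgen : Submodule.span R (Set.range x) = ⊤) :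
    BddAbove (gdegSet R B) ∧
    gdeg R B =
      elemDeg (MvPolynomial (Fin m) R)
        (∑ i : Fin m, (MvPolynomial.X i : MvPolynomial (Fin m) R) ⊗ₜ[R] x i :
          (MvPolynomial (Fin m) R) ⊗[R] B) := by
  classical
  set A := MvPolynomial (Fin m) R with hA
  set ξ : A ⊗[R] B := ∑ i : Fin m, (MvPolynomial.X i : A) ⊗ₜ[R] x i with hξ
  -- degenerate case: R trivial
  rcases subsingleton_or_nontrivial R with hR | hR
  · have hS : ∀ (S : Type) [CommRing S] [Algebra R S], Subsingleton S := by
      intro S _ _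
      have : (1 : S) = 0 := by
        rw [show (1 : S) = algebraMap R S 1 from (map_one _).symm,
          Subsingleton.elim (1 : R) 0, map_zero]
      exact subsingleton_of_zero_eq_one this.symm
    have hsub : gdegSet R B ⊆ {0} := by
      rintro k ⟨S, rfl⟩
      haveI := hS S.carrier
      exact algDeg_subsingleton
    constructor
    · exact ⟨0, fun k hk => le_of_eq (hsub hk)⟩
    · have h1 : gdeg R B = 0 := by
        rw [gdeg]
        rcases Set.eq_empty_or_nonempty (gdegSet R B) with h | h
        · rw [h, csSup_empty]; rfl
        · exact le_antisymm (csSup_le h fun k hk => le_of_eq (hsub hk)) (Nat.zero_le _)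
      have h2 : elemDeg A ξ = 0 := by
        rw [elemDeg]
        convert Nat.sInf_empty
        ext n
        simp only [Set.mem_setOf_eq, Set.mem_empty_iff_false, iff_false, not_and]
        intro hn ⟨f, _, hd, _⟩
        haveI := hS A
        have : f = 0 := Subsingleton.elim f 0
        rw [this, Polynomial.natDegree_zero] at hd
        omega
      rw [h1, h2]
  -- main case: R nontrivial
  · haveI : Nontrivial A := by infer_instance
    have hsatA : SatisfiesMonicDeg A ξ (m + 1) := sat_all hgen A ξ
    set d := elemDeg A ξ with hd
    have hdmem : d ∈ {n | 0 < n ∧ SatisfiesMonicDeg A ξ n} :=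
      Nat.sInf_mem ⟨m + 1, Nat.succ_pos m, hsatA⟩
    have hspec : ∀ (S : Type) [CommRing S] [Algebra R S] [Nontrivial S] (y : S ⊗[R] B),
        SatisfiesMonicDeg S y d := fun S _ _ _ y => sat_specialize hgen hdmem.2 S y
    have key1 : ∀ (S : Type) [CommRing S] [Algebra R S], algDeg S (S ⊗[R] B) ≤ d := by
      intro S _ _
      rcases subsingleton_or_nontrivial S with h | h
      · rw [algDeg_subsingleton]; exact Nat.zero_le _
      · exact Nat.sInf_le ⟨hdmem.1, fun y => hspec S y⟩
    have key2 : algDeg A (A ⊗[R] B) = d := by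
      refine le_antisymm (key1 A) ?_
      refine le_csInf ⟨m + 1, Nat.succ_pos m, fun y => sat_all hgen A y⟩ ?_
      rintro n ⟨hn, hall⟩
      exact Nat.sInf_le ⟨hn, hall ξ⟩
    have hbound : ∀ k ∈ gdegSet R B, k ≤ d := by
      rintro k ⟨S, rfl⟩
      exact key1 S.carrier
    have hmem : d ∈ gdegSet R B := ⟨⟨A⟩, key2⟩
    exact ⟨⟨d, hbound⟩, le_antisymm (csSup_le ⟨d, hmem⟩ hbound) (le_csSup ⟨d, hbound⟩ hmem)⟩
end

section
/- For a finitely generated projective R-algebra B, the geometric degree satisfies gdeg_R(B) = max over primes p of Spec R of gdeg_{R_p}(B_p). -/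
open TensorProduct

universe u

/-!
By Cayley–Hamilton, every element of `S ⊗[R] B` satisfies a monic polynomial whose degree is the
number of generators of `B`, so the degrees defining `gdeg` are bounded and the supremum is
attained by some base change `S`. A base change of `B_p` over `R_p` is a base change of `B` over
`R`, which gives the inequality. For the equality, let `d = gdeg_R(B) ≥ 2` (smaller `d` is
attained by every prime) and pick `x ∈ S ⊗[R] B` with no monic equation of degree `d - 1`;
equivalently `x ^ (d - 1)` lies outside the span of the lower powers of `x`. Submodule membership
is a local property, so this persists over `S_q` for some maximal ideal `q` of `S`, and `S_q` is
an algebra over `R_p` for `p = q ∩ R`.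
-/

open Polynomial

section SatisfiesMonicDeg

variable {S A : Type*} [CommRing S] [Ring A] [Algebra S A]

theorem SatisfiesMonicDeg.map {A' : Type*} [Ring A'] [Algebra S A'] (φ : A →ₐ[S] A') {x : A}
    {n : ℕ} (h : SatisfiesMonicDeg S x n) : SatisfiesMonicDeg S (φ x) n := by
  obtain ⟨f, hf, hdeg, hx⟩ := h
  exact ⟨f, hf, hdeg, by rw [aeval_algHom_apply, hx, map_zero]⟩

theorem algDeg_congr {A' : Type*} [Ring A'] [Algebra S A'] (e : A ≃ₐ[S] A') :
    algDeg S A = algDeg S A' := by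
  refine congrArg sInf (Set.ext fun n => and_congr_right fun _ => ⟨fun h y => ?_, fun h x => ?_⟩)
  · simpa using (h (e.symm y)).map (e : A →ₐ[S] A')
  · simpa using (h (e x)).map (e.symm : A' →ₐ[S] A)

theorem SatisfiesMonicDeg.mono [Nontrivial S] {x : A} {n m : ℕ} (h : SatisfiesMonicDeg S x n)
    (hnm : n ≤ m) : SatisfiesMonicDeg S x m := by
  obtain ⟨f, hf, hdeg, hx⟩ := h
  refine ⟨X ^ (m - n) * f, (monic_X_pow _).mul hf, ?_, by rw [map_mul, hx, mul_zero]⟩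
  rw [(monic_X_pow _).natDegree_mul hf, natDegree_X_pow, hdeg, Nat.sub_add_cancel hnm]

theorem aeval_mem_span_pow_of_degree_lt {g : S[X]} {n : ℕ} (hg : g.degree < n) (x : A) :
    aeval x g ∈ Submodule.span S (Set.range fun i : Fin n => x ^ (i : ℕ)) := by
  rcases eq_or_ne g 0 with rfl | hg0
  · simp
  rw [aeval_eq_sum_range' ((natDegree_lt_iff_degree_lt hg0).2 hg), Finset.sum_range]
  exact Submodule.sum_mem _ fun i _ => Submodule.smul_mem _ _ (Submodule.subset_span ⟨i, rfl⟩)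

theorem satisfiesMonicDeg_iff_pow_mem_span [Nontrivial S] {x : A} {n : ℕ} :
    SatisfiesMonicDeg S x n ↔
      x ^ n ∈ Submodule.span S (Set.range fun i : Fin n => x ^ (i : ℕ)) := by
  constructor
  · rintro ⟨f, hf, hdeg, hx⟩
    have hlt : (X ^ n %ₘ f).degree < n := by
      simpa [degree_eq_natDegree hf.ne_zero, hdeg] using degree_modByMonic_lt (X ^ n) hf
    simpa [aeval_modByMonic_eq_self_of_root hx] using aeval_mem_span_pow_of_degree_lt hlt x
  · intro h
    obtain ⟨c, hc⟩ := (Submodule.mem_span_range_iff_exists_fun S).mp h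
    have hlt := degree_sum_fin_lt c
    refine ⟨X ^ n - ∑ i : Fin n, C (c i) * X ^ (i : ℕ), monic_X_pow_sub hlt, ?_, ?_⟩
    · exact natDegree_eq_of_degree_eq_some <| by
        rw [degree_sub_eq_left_of_degree_lt (by rwa [degree_X_pow]), degree_X_pow]
    · simp [← hc, Algebra.smul_def]

theorem satisfiesMonicDeg_spanFinrank [Module.Finite S A] (x : A) :
    SatisfiesMonicDeg S x (⊤ : Submodule S A).spanFinrank := by
  obtain ⟨f, hf, hdeg, hx⟩ :=
    LinearMap.exists_monic_and_natDegree_eq_and_aeval_eq_zero S (Algebra.lmul S A x)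
  refine ⟨f, hf, hdeg, ?_⟩
  rw [aeval_algHom_apply] at hx
  simpa using congrArg (· 1) hx

theorem algDeg_eq_zero_of_subsingleton [Subsingleton S] : algDeg S A = 0 := by
  refine Nat.sInf_eq_zero.mpr (Or.inr (Set.eq_empty_of_forall_notMem fun n ⟨hn, h⟩ => ?_))
  obtain ⟨f, -, hdeg, -⟩ := h 0
  rw [Subsingleton.elim f 0, natDegree_zero] at hdeg
  omega

theorem exists_forall_satisfiesMonicDeg [Nontrivial S] [Module.Finite S A] :
    ∃ n, 0 < n ∧ ∀ x : A, SatisfiesMonicDeg S x n :=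
  ⟨max (⊤ : Submodule S A).spanFinrank 1, by omega,
    fun x => (satisfiesMonicDeg_spanFinrank x).mono (le_max_left _ _)⟩

theorem algDeg_pos [Nontrivial S] [Module.Finite S A] : 0 < algDeg S A :=
  (Nat.sInf_mem exists_forall_satisfiesMonicDeg).1

theorem lt_algDeg_iff [Nontrivial S] [Module.Finite S A] {m : ℕ} (hm : 0 < m) :
    m < algDeg S A ↔ ∃ x : A, ¬ SatisfiesMonicDeg S x m := by
  constructor
  · intro h
    by_contra! hsat
    exact Nat.notMem_of_lt_sInf h ⟨hm, hsat⟩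
  · rintro ⟨x, hx⟩
    by_contra! h
    exact hx (((Nat.sInf_mem exists_forall_satisfiesMonicDeg).2 x).mono h)

end SatisfiesMonicDeg

section Localization

variable {S A : Type*} [CommRing S] [Ring A] [Algebra S A]

theorem exists_isMaximal_not_satisfiesMonicDeg_localization [Nontrivial S] {x : A} {m : ℕ}
    (hx : ¬ SatisfiesMonicDeg S x m) :
    ∃ (q : Ideal S) (_ : q.IsMaximal),
      ¬ SatisfiesMonicDeg (Localization.AtPrime q) ((1 : Localization.AtPrime q) ⊗ₜ[S] x) m := by
  by_contra! h
  rw [satisfiesMonicDeg_iff_pow_mem_span] at hx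
  let f (q : Ideal S) [q.IsMaximal] : A →ₗ[S] Localization.AtPrime q ⊗[S] A :=
    TensorProduct.mk S _ A 1
  have hf (q : Ideal S) [q.IsMaximal] : IsLocalizedModule q.primeCompl (f q) :=
    (isLocalizedModule_iff_isBaseChange q.primeCompl _ _).mpr (TensorProduct.isBaseChange S A _)
  refine hx (Submodule.mem_of_localization_maximal _ f _ _ fun q _ => ?_)
  have hpow (i : ℕ) : f q (x ^ i) = ((1 : Localization.AtPrime q) ⊗ₜ[S] x) ^ i := by
    rw [Algebra.TensorProduct.tmul_pow, one_pow]; rfl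
  change _ ∈ Submodule.localized' (Localization.AtPrime q) q.primeCompl (f q) _
  rw [Submodule.localized'_span, ← Set.range_comp, hpow]
  simpa only [Function.comp_def, hpow] using
    satisfiesMonicDeg_iff_pow_mem_span.mp (h q inferInstance)

theorem exists_isMaximal_algDeg_le_algDeg_localization [Nontrivial S] [Module.Finite S A] :
    ∃ (q : Ideal S) (_ : q.IsMaximal),
      algDeg S A ≤ algDeg (Localization.AtPrime q) (Localization.AtPrime q ⊗[S] A) := by
  rcases le_or_gt (algDeg S A) 1 with hle | hlt
  · obtain ⟨q, hq⟩ := Ideal.exists_maximal S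
    exact ⟨q, hq, hle.trans algDeg_pos⟩
  · obtain ⟨x, hx⟩ := (lt_algDeg_iff (S := S) (A := A) (m := algDeg S A - 1) (by omega)).mp
      (by omega)
    obtain ⟨q, hq, hxq⟩ := exists_isMaximal_not_satisfiesMonicDeg_localization hx
    have := (lt_algDeg_iff (by omega)).mpr ⟨_, hxq⟩
    exact ⟨q, hq, by omega⟩

end Localization

-- Mathlib's `Algebra.TensorProduct.cancelBaseChange` needs `B` to be commutative.
noncomputable def cancelBaseChangeAlgEquiv (R S T B : Type*) [CommSemiring R] [CommSemiring S]
    [CommSemiring T] [Semiring B] [Algebra R S] [Algebra R B] [Algebra S T] [Algebra R T]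
    [IsScalarTower R S T] :
    T ⊗[S] (S ⊗[R] B) ≃ₐ[T] T ⊗[R] B :=
  AlgEquiv.symm <| AlgEquiv.ofLinearEquiv
    (TensorProduct.AlgebraTensorModule.cancelBaseChange R S T T B).symm
    (by simp [Algebra.TensorProduct.one_def]) <|
      LinearMap.map_mul_of_map_mul_tmul (fun _ _ _ _ ↦ by simp)

theorem spanFinrank_top_baseChange_le {R B : Type*} [CommRing R] [AddCommGroup B] [Module R B]
    [Module.Finite R B] (S : Type*) [CommRing S] [Algebra R S] :
    (⊤ : Submodule S (S ⊗[R] B)).spanFinrank ≤ (⊤ : Submodule R B).spanFinrank := by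
  rw [← Submodule.baseChange_top]
  exact Module.Finite.fg_top.spanFinrank_baseChange_le

section GeometricDegree

variable (R B : Type u) [CommRing R] [Ring B] [Algebra R B]

theorem gdegSet_baseChange_subset (S : Type u) [CommRing S] [Algebra R S] :
    gdegSet S (S ⊗[R] B) ⊆ gdegSet R B := by
  rintro _ ⟨T, rfl⟩
  let _ : Algebra R T.carrier := ((algebraMap S T.carrier).comp (algebraMap R S)).toAlgebra
  have : IsScalarTower R S T.carrier := IsScalarTower.of_algebraMap_eq' rfl
  exact ⟨⟨T.carrier⟩, (algDeg_congr (cancelBaseChangeAlgEquiv R S T.carrier B)).symm⟩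

variable [Module.Finite R B]

theorem bddAbove_gdegSet : BddAbove (gdegSet R B) := by
  refine ⟨max (⊤ : Submodule R B).spanFinrank 1, ?_⟩
  rintro _ ⟨S, rfl⟩
  cases subsingleton_or_nontrivial S.carrier
  · simp [algDeg_eq_zero_of_subsingleton]
  · refine Nat.sInf_le ⟨by omega, fun x => (satisfiesMonicDeg_spanFinrank x).mono ?_⟩
    exact (spanFinrank_top_baseChange_le S.carrier).trans (le_max_left _ _)

theorem algDeg_le_gdeg (S : Type u) [CommRing S] [Algebra R S] :
    algDeg S (S ⊗[R] B) ≤ gdeg R B :=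
  le_csSup (bddAbove_gdegSet R B) ⟨⟨S⟩, rfl⟩

theorem gdeg_baseChange_le (S : Type u) [CommRing S] [Algebra R S] :
    gdeg S (S ⊗[R] B) ≤ gdeg R B :=
  csSup_le_csSup' (bddAbove_gdegSet R B) (gdegSet_baseChange_subset R B S)

theorem exists_algDeg_eq_gdeg : ∃ S : RAlg R, algDeg S.carrier (S.carrier ⊗[R] B) = gdeg R B :=
  Nat.sSup_mem (⟨_, ⟨R⟩, rfl⟩ : (gdegSet R B).Nonempty) (bddAbove_gdegSet R B)

theorem algDeg_localization_le_gdeg_localization (S : Type u) [CommRing S] [Algebra R S]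
    (q : Ideal S) [q.IsPrime] :
    algDeg (Localization.AtPrime q) (Localization.AtPrime q ⊗[S] (S ⊗[R] B)) ≤
      gdeg (Localization.AtPrime (q.under R)) (Localization.AtPrime (q.under R) ⊗[R] B) := by
  let _ := Localization.AtPrime.algebraOfLiesOver (q.under R) q
  rw [algDeg_congr (cancelBaseChangeAlgEquiv R S _ B),
    ← algDeg_congr (cancelBaseChangeAlgEquiv R (Localization.AtPrime (q.under R)) _ B)]
  exact algDeg_le_gdeg _ _ _

end GeometricDegree

theorem stmt10_general (R B : Type) [CommRing R] [Nontrivial R]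
    [Ring B] [Algebra R B] [Module.Finite R B] :
    (∀ (p : Ideal R) (hp : p.IsPrime),
      haveI := hp
      gdeg (Localization.AtPrime p) ((Localization.AtPrime p) ⊗[R] B) ≤ gdeg R B) ∧
    (∃ (p : Ideal R) (hp : p.IsPrime),
      haveI := hp
      gdeg (Localization.AtPrime p) ((Localization.AtPrime p) ⊗[R] B) = gdeg R B) := by
  refine ⟨fun p _ => gdeg_baseChange_le R B _, ?_⟩
  obtain ⟨S, hS⟩ := exists_algDeg_eq_gdeg R B
  cases subsingleton_or_nontrivial S.carrier
  · obtain ⟨p, hp⟩ := Ideal.exists_maximal R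
    refine ⟨p, hp.isPrime, (gdeg_baseChange_le R B _).antisymm ?_⟩
    simp [← hS, algDeg_eq_zero_of_subsingleton]
  · obtain ⟨q, _, hq⟩ := exists_isMaximal_algDeg_le_algDeg_localization (S := S.carrier)
      (A := S.carrier ⊗[R] B)
    refine ⟨q.under R, inferInstance, (gdeg_baseChange_le R B _).antisymm ?_⟩
    exact hS ▸ hq.trans (algDeg_localization_le_gdeg_localization R B S.carrier q)

/-- The geometric degree of a finitely generated projective `R`-algebra `B` is the maximum,
over the primes `p` of `R`, of the geometric degree of `B_p` over `R_p`: each local geometric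
degree is at most `gdeg_R(B)`, and some prime attains it. -/
theorem stmt10 (R B : Type) [CommRing R] [IsNoetherianRing R] [Nontrivial R]
    [Ring B] [Algebra R B] [Module.Finite R B] [Module.Projective R B] :
    (∀ (p : Ideal R) (hp : p.IsPrime),
      haveI := hp
      gdeg (Localization.AtPrime p) ((Localization.AtPrime p) ⊗[R] B) ≤ gdeg R B) ∧
    (∃ (p : Ideal R) (hp : p.IsPrime),
      haveI := hp
      gdeg (Localization.AtPrime p) ((Localization.AtPrime p) ⊗[R] B) = gdeg R B) :=
  stmt10_general R B
end

section
/- If a finitely generated projective R-algebra B admits a standard involution, then this standard involution is unique. -/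
/-!
The difference `S = σ - τ` of two standard involutions kills `1`, takes values in `R` (both
reduced traces `x + σ x`, `x + τ x` do), and `x * S x = x σ(x) - x τ(x)` lies in `R` as well.
It suffices to show that such an `S` vanishes after localizing at each maximal ideal. Over a local
ring `B` is free, and `1` has a unit coordinate at some basis vector `b i₀`. Any other basis
vector `e` meets `R · 1` only in `0` and is torsion free, so `e * S e ∈ R` forces `S e = 0`, and
then `(x + e) S(x + e) - x S(x) = e S(x) ∈ R` forces `S x = 0`. If there is no other basis vector,
`B = R · 1` and `S 1 = 0` gives `S = 0`.
-/

/-- `σ` is a standard involution on the `R`-algebra `B`: an `R`-linear anti-automorphism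
with `σ(1) = 1`, `σ² = id`, and `x·σ(x) ∈ R` for all `x`. -/
def IsStandardInvolution (R : Type*) {B : Type*} [CommRing R] [Ring B] [Algebra R B]
    (σ : B →ₗ[R] B) : Prop :=
  σ 1 = 1 ∧ (∀ x y : B, σ (x * y) = σ y * σ x) ∧ (∀ x : B, σ (σ x) = x) ∧
    ∀ x : B, x * σ x ∈ (algebraMap R B).range

open IsLocalRing in
theorem Module.Basis.exists_isUnit_repr_one {R B ι : Type*} [CommRing R] [IsLocalRing R] [Ring B]
    [Algebra R B] [Nontrivial B] (b : Module.Basis ι R B) : ∃ i, IsUnit (b.repr 1 i) := by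
  by_contra! h
  obtain ⟨j⟩ := b.index_nonempty
  -- the `j`-th coordinate of `b j * 1 = ∑ (b.repr 1 i) • (b j * b i)` is `1` but lies in `𝔪`
  have hmem : b.coord j (b j * 1) ∈ maximalIdeal R := by
    rw [← b.linearCombination_repr 1, Finsupp.linearCombination_apply, Finsupp.sum,
      Finset.mul_sum, map_sum]
    refine Ideal.sum_mem _ fun i _ => ?_
    rw [mul_smul_comm, map_smul, smul_eq_mul]
    exact Ideal.mul_mem_right _ _ ((mem_maximalIdeal _).2 (h i))
  rw [mul_one, b.coord_apply, b.repr_self, Finsupp.single_eq_same] at hmem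
  exact (maximalIdeal.isMaximal R).ne_top ((Ideal.eq_top_iff_one _).2 hmem)

namespace LocalizedModule

-- Mathlib's `algebraOfIsLocalization` extends a module structure that is not defeq to the
-- default `Module (Localization T) (LocalizedModule T A)` used by the localization API.
noncomputable abbrev localizationAlgebra {R : Type*} [CommRing R] (T : Submonoid R)
    (A : Type*) [Ring A] [Algebra R A] : Algebra (Localization T) (LocalizedModule T A) :=
  Algebra.ofModule
    (fun r x y => by
      induction r using Localization.induction_on
      induction x, y using induction_on₂
      simp only [mk_smul_mk, mk_mul_mk, smul_mul_assoc, mul_assoc])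
    (fun r x y => by
      induction r using Localization.induction_on
      induction x, y using induction_on₂
      simp only [mk_smul_mk, mk_mul_mk, mul_smul_comm, mul_left_comm])

theorem one_eq_mk {R A : Type*} [CommRing R] [Ring A] [Algebra R A]
    {T : Submonoid R} : (1 : LocalizedModule T A) = mk 1 1 :=
  OreLocalization.one_def

attribute [local instance] localizationAlgebra in
theorem localizationAlgebra_algebraMap_mk {R A : Type*} [CommRing R] [Ring A]
    [Algebra R A] {T : Submonoid R} (a : R) (s : T) :
    algebraMap (Localization T) (LocalizedModule T A) (Localization.mk a s) =
      mk (algebraMap R A a) s := by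
  rw [Algebra.algebraMap_eq_smul_one, one_eq_mk, mk_smul_mk, mul_one,
    Algebra.algebraMap_eq_smul_one]

end LocalizedModule

/-- The properties of the difference of two standard involutions that force it to vanish. -/
structure IsScalarDifference (R : Type*) {B : Type*} [CommRing R] [Ring B] [Algebra R B]
    (S : B →ₗ[R] B) : Prop where
  map_one : S 1 = 0
  apply_mem_range : ∀ x, S x ∈ (algebraMap R B).range
  mul_apply_mem_range : ∀ x, x * S x ∈ (algebraMap R B).range

namespace IsScalarDifference

variable {R B : Type*} [CommRing R] [Ring B] [Algebra R B] {S : B →ₗ[R] B}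

attribute [local instance] LocalizedModule.localizationAlgebra

theorem eq_zero_of_isUnit_repr_one (hS : IsScalarDifference R S) {ι : Type*}
    (b : Module.Basis ι R B) {i₀ : ι} (hu : IsUnit (b.repr 1 i₀)) : S = 0 := by
  obtain ⟨u, hu⟩ := hu
  let f : B →ₗ[R] R := (↑u⁻¹ : R) • b.coord i₀
  have hf1 : f 1 = 1 := by simp [f, ← hu]
  ext x
  by_cases hι : ∀ j, j = i₀
  · have hx : x = f x • 1 := b.ext_elem fun j => by
      obtain rfl := hι j
      simp [f, ← hu, mul_right_comm]
    rw [hx, map_smul, hS.map_one, smul_zero, LinearMap.zero_apply]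
  push Not at hι
  obtain ⟨j, hj⟩ := hι
  -- `b j` is a scalar multiple of `1` only trivially, as `f` kills it but not `1`
  have hscalar : ∀ c : R, c • b j ∈ (algebraMap R B).range → c = 0 := by
    rintro c ⟨a, ha⟩
    have hfb : f (b j) = 0 := by simp [f, Finsupp.single_eq_of_ne' hj]
    have ha0 : a = 0 := by
      simpa [Algebra.algebraMap_eq_smul_one, hf1, hfb] using congrArg f ha
    simpa [ha0] using congrArg (b.repr · j) ha.symm
  have mul_algebraMap : ∀ (y : B) (r : R), y * algebraMap R B r = r • y := fun y r => by
    rw [← Algebra.commutes, Algebra.smul_def]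
  have hSb : S (b j) = 0 := by
    obtain ⟨v, hv⟩ := hS.apply_mem_range (b j)
    have := hS.mul_apply_mem_range (b j)
    rw [← hv, mul_algebraMap] at this
    rw [← hv, hscalar v this, map_zero]
  obtain ⟨w, hw⟩ := hS.apply_mem_range x
  have hcross : b j * S x ∈ (algebraMap R B).range := by
    have := sub_mem (hS.mul_apply_mem_range (x + b j)) (hS.mul_apply_mem_range x)
    rwa [map_add, hSb, add_zero, add_mul, add_sub_cancel_left] at this
  rw [← hw, mul_algebraMap] at hcross
  rw [LinearMap.zero_apply, ← hw, hscalar w hcross, map_zero]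

theorem eq_zero_of_isLocalRing [IsLocalRing R] [Module.Finite R B] [Module.Projective R B]
    (hS : IsScalarDifference R S) : S = 0 := by
  rcases subsingleton_or_nontrivial B with hB | hB
  · exact Subsingleton.elim _ _
  have := Module.free_of_flat_of_isLocalRing (R := R) (P := B)
  obtain ⟨i, hi⟩ := (Module.Free.chooseBasis R B).exists_isUnit_repr_one
  exact hS.eq_zero_of_isUnit_repr_one _ hi

theorem localizedMap (hS : IsScalarDifference R S) (T : Submonoid R) :
    IsScalarDifference (Localization T) (LocalizedModule.map T S) where
  map_one := by
    rw [LocalizedModule.one_eq_mk, LocalizedModule.map_mk, hS.map_one, LocalizedModule.zero_mk]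
  apply_mem_range z := by
    induction z using LocalizedModule.induction_on with
    | h a s =>
      obtain ⟨r, hr⟩ := hS.apply_mem_range a
      exact ⟨Localization.mk r s, by
        rw [LocalizedModule.localizationAlgebra_algebraMap_mk, hr, LocalizedModule.map_mk]⟩
  mul_apply_mem_range z := by
    induction z using LocalizedModule.induction_on with
    | h a s =>
      obtain ⟨r, hr⟩ := hS.mul_apply_mem_range a
      exact ⟨Localization.mk r (s * s), by
        rw [LocalizedModule.localizationAlgebra_algebraMap_mk, hr, LocalizedModule.map_mk,
          LocalizedModule.mk_mul_mk]⟩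

theorem eq_zero [Module.Finite R B] [Module.Projective R B]
    (hS : IsScalarDifference R S) : S = 0 := by
  ext x
  refine Module.eq_zero_of_localization_maximal (R := R)
    (fun P _ => LocalizedModule P.primeCompl B)
    (fun P _ => LocalizedModule.mkLinearMap P.primeCompl B) (S x) fun P _ => ?_
  have : Module.Finite (Localization P.primeCompl) (LocalizedModule P.primeCompl B) :=
    .of_isLocalizedModule P.primeCompl (LocalizedModule.mkLinearMap P.primeCompl B)
  have : Module.Projective (Localization P.primeCompl) (LocalizedModule P.primeCompl B) :=
    Module.projective_of_isLocalizedModule P.primeCompl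
      (LocalizedModule.mkLinearMap P.primeCompl B)
  rw [LocalizedModule.mkLinearMap_apply, ← LocalizedModule.map_mk,
    (hS.localizedMap P.primeCompl).eq_zero_of_isLocalRing, LinearMap.zero_apply]

end IsScalarDifference

theorem IsStandardInvolution.add_apply_mem_range {R B : Type*} [CommRing R] [Ring B] [Algebra R B]
    {σ : B →ₗ[R] B} (hσ : IsStandardInvolution R σ) (x : B) :
    x + σ x ∈ (algebraMap R B).range := by
  have hexp : x + σ x = (x + 1) * σ (x + 1) - x * σ x - 1 := by
    rw [map_add, hσ.1]
    noncomm_ring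
  rw [hexp]
  exact sub_mem (sub_mem (hσ.2.2.2 _) (hσ.2.2.2 x)) (one_mem _)

theorem IsStandardInvolution.isScalarDifference_sub {R B : Type*} [CommRing R] [Ring B]
    [Algebra R B] {σ τ : B →ₗ[R] B} (hσ : IsStandardInvolution R σ)
    (hτ : IsStandardInvolution R τ) : IsScalarDifference R (σ - τ) where
  map_one := by rw [LinearMap.sub_apply, hσ.1, hτ.1, sub_self]
  apply_mem_range x := by
    rw [LinearMap.sub_apply, ← add_sub_add_left_eq_sub _ _ x]
    exact sub_mem (hσ.add_apply_mem_range x) (hτ.add_apply_mem_range x)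
  mul_apply_mem_range x := by
    rw [LinearMap.sub_apply, mul_sub]
    exact sub_mem (hσ.2.2.2 x) (hτ.2.2.2 x)

theorem stmt12_general (R B : Type) [CommRing R] [Ring B] [Algebra R B]
    [Module.Finite R B] [Module.Projective R B]
    (σ τ : B →ₗ[R] B) (hσ : IsStandardInvolution R σ) (hτ : IsStandardInvolution R τ) :
    σ = τ :=
  sub_eq_zero.mp (hσ.isScalarDifference_sub hτ).eq_zero

/-- A finitely generated projective `R`-algebra has at most one standard involution. -/
theorem stmt12 (R B : Type) [CommRing R] [IsNoetherianRing R] [Ring B] [Algebra R B]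
    [Module.Finite R B] [Module.Projective R B]
    (hconn : ∀ e : R, IsIdempotentElem e → e = 0 ∨ e = 1)
    (σ τ : B →ₗ[R] B) (hσ : IsStandardInvolution R σ) (hτ : IsStandardInvolution R τ) :
    σ = τ :=
  stmt12_general R B σ τ hσ hτ
end

section
/- Let B be an exceptional ring over R of rank n > 2, i.e., B = R ⊕ M where M is a left ideal of B, M is projective of rank n−1, and left multiplication by elements of M on M is given by scalar multiplication through an R-linear map t: M → R (so xy = t(x)y for x, y ∈ M). Then the splitting B = R ⊕ M with these properties is unique: if B = R ⊕ M′ is another such splitting, then M′ = M. -/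
/-- `M` has constant rank `n` over `R`. -/
def ModConstRank (R M : Type*) [CommRing R] [AddCommGroup M] [Module R M] (n : ℕ) : Prop :=
  ∀ (p : Ideal R) (hp : p.IsPrime),
    haveI := hp
    Nonempty (Module.Basis (Fin n) (Localization.AtPrime p) (LocalizedModule p.primeCompl M))

/-- `M` is an exceptional splitting of the `R`-algebra `B`: `B = R ⊕ M` as `R`-modules, `M`
is a left ideal of `B`, and left multiplication of `M` on `M` factors through an `R`-linear
map `t : M → R`, i.e. `x y = t(x) y` for `x, y ∈ M`. -/
def IsExceptionalSplitting (R : Type*) {B : Type*} [CommRing R] [Ring B] [Algebra R B]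
    (M : Submodule R B) : Prop :=
  IsCompl (LinearMap.range (Algebra.linearMap R B)) M ∧
  (∀ (b : B), ∀ m ∈ M, b * m ∈ M) ∧
  ∃ t : M →ₗ[R] R, ∀ x y : M, (x : B) * (y : B) = t x • (y : B)

/-!
Write `x ∈ M'` as `x = σ x + π x` along `B = R ⊕ M`. Comparing `M`-components in
`x y = t'(x) y` and using `R ∩ M' = 0` gives `σ y • x = g x • y` on `M'` for a linear `g`.
Locally `M'` is free of rank `≥ 2`, and evaluating this identity on two distinct basis vectors
forces `σ = 0` on `M'`, i.e. `M' ≤ M`; by symmetry `M = M'`.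
-/

theorem Module.Basis.eq_zero_of_smul_eq_smul {A N ι : Type*} [CommRing A] [AddCommGroup N]
    [Module A N] [Nontrivial ι] (b : Module.Basis ι A N) (f : N →ₗ[A] A) (g : N → A)
    (h : ∀ x y, f y • x = g x • y) : f = 0 := by
  refine b.ext fun j ↦ ?_
  obtain ⟨i, hij⟩ := exists_ne j
  simpa [Finsupp.single_apply, hij] using congr(b.repr $(h (b i) (b j)) i)

namespace ModConstRank

variable {R M : Type*} [CommRing R] [AddCommGroup M] [Module R M] {k : ℕ}

theorem eq_zero_of_smul_eq_zero (hrk : ModConstRank R M k) (hk : 0 < k) {r : R}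
    (h : ∀ x : M, r • x = 0) : r = 0 := by
  refine eq_zero_of_localization r fun J hJ ↦ ?_
  obtain ⟨b⟩ := hrk J hJ.isPrime
  let ι := LocalizedModule.mkLinearMap J.primeCompl M
  have hr : r • (LinearMap.id : _ →ₗ[R] LocalizedModule J.primeCompl M) = 0 :=
    IsLocalizedModule.linearMap_ext J.primeCompl ι ι <| LinearMap.ext fun x ↦ by
      simp [← map_smul, h]
  have := congr(b.repr ($hr (b ⟨0, hk⟩)) ⟨0, hk⟩)
  rw [LinearMap.smul_apply, LinearMap.id_apply, ← algebraMap_smul (Localization.AtPrime J) r,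
    map_smul] at this
  simpa [Algebra.smul_def] using this

theorem eq_zero_of_smul_eq_smul (hrk : ModConstRank R M k) (hk : 2 ≤ k) (f g : M →ₗ[R] R)
    (h : ∀ x y, f y • x = g x • y) : f = 0 := by
  refine LinearMap.ext fun x ↦ eq_zero_of_localization _ fun J hJ ↦ ?_
  obtain ⟨b⟩ := hrk J hJ.isPrime
  let S := J.primeCompl
  let Rₚ := Localization.AtPrime J
  let ι := LocalizedModule.mkLinearMap S M
  let loc := IsLocalizedModule.mapExtendScalars S ι (Algebra.linearMap R Rₚ) Rₚ
  have loc_apply : ∀ (φ : M →ₗ[R] R) m, loc φ (ι m) = algebraMap R Rₚ (φ m) := fun φ m ↦ by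
    simp [loc, IsLocalizedModule.map_apply]
  let idₚ : LocalizedModule S M →ₗ[Rₚ] LocalizedModule S M := LinearMap.id
  -- The identity passes from `M` to `Mₚ` one variable at a time, by the universal property.
  have smul_mk_eq : ∀ m v, loc f v • ι m = loc g (ι m) • v := fun m v ↦ by
    have : ((loc f).smulRight (ι m)).restrictScalars R = (loc g (ι m) • idₚ).restrictScalars R :=
      IsLocalizedModule.linearMap_ext S ι ι <| LinearMap.ext fun m' ↦ by
        simp only [LinearMap.comp_apply, LinearMap.restrictScalars_apply,
          LinearMap.smulRight_apply, LinearMap.smul_apply, idₚ, LinearMap.id_apply, loc_apply,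
          algebraMap_smul]
        rw [← map_smul, ← map_smul, h]
    simpa [idₚ] using congr($this v)
  have smul_eq_smul : ∀ u v, loc f v • u = loc g u • v := fun u v ↦ by
    have : (loc f v • idₚ).restrictScalars R = ((loc g).smulRight v).restrictScalars R :=
      IsLocalizedModule.linearMap_ext S ι ι <| LinearMap.ext fun m ↦ by
        simpa [idₚ] using smul_mk_eq m v
    simpa [idₚ] using congr($this u)
  have : Nontrivial (Fin k) := Fin.nontrivial_iff_two_le.mpr hk
  simpa [loc_apply] using congr($(b.eq_zero_of_smul_eq_smul (loc f) (loc g) smul_eq_smul) (ι x))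

end ModConstRank

theorem smul_one_eq_zero_of_disjoint {R B : Type*} [CommRing R] [Ring B] [Algebra R B]
    {N : Submodule R B} (hN : Disjoint (LinearMap.range (Algebra.linearMap R B)) N) {r : R}
    (hr : r • (1 : B) ∈ N) : r • (1 : B) = 0 :=
  Submodule.disjoint_def.mp hN _ ⟨r, by simp [Algebra.algebraMap_eq_smul_one]⟩ hr

namespace IsExceptionalSplitting

variable {R B : Type*} [CommRing R] [Ring B] [Algebra R B] {M M' : Submodule R B}

theorem exists_smul_one_add_eq (hinj : Function.Injective (algebraMap R B))
    (hc : IsCompl (LinearMap.range (Algebra.linearMap R B)) M) :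
    ∃ (σ : B →ₗ[R] R) (π : B →ₗ[R] M), ∀ b, σ b • 1 + π b = b := by
  refine ⟨LinearMap.linearProjOfIsCompl M (Algebra.linearMap R B) hinj hc,
    M.projectionOnto _ hc.symm, fun b ↦ ?_⟩
  have : LinearMap.linearProjOfIsCompl M (Algebra.linearMap R B) hinj hc b • (1 : B) =
      (LinearMap.range (Algebra.linearMap R B)).projection M hc b := by
    simp only [LinearMap.linearProjOfIsCompl, ← Algebra.algebraMap_eq_smul_one]
    exact LinearEquiv.ofInjective_symm_apply (f := Algebra.linearMap R B) (h := hinj) _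
  simpa [this] using Submodule.projection_add_projection_eq_self hc b

theorem exists_smul_eq_smul (hinj : Function.Injective (algebraMap R B))
    (hM : IsExceptionalSplitting R M) (hM' : IsExceptionalSplitting R M') :
    ∃ f g : M' →ₗ[R] R, (∀ x y, f y • x = g x • y) ∧ ∀ x : M', (x : B) - f x • 1 ∈ M := by
  obtain ⟨hc, -, t, ht⟩ := hM
  obtain ⟨hc', -, t', ht'⟩ := hM'
  obtain ⟨σ, π, decomp⟩ := exists_smul_one_add_eq hinj hc
  refine ⟨σ ∘ₗ M'.subtype, t' - σ ∘ₗ M'.subtype - t ∘ₗ π ∘ₗ M'.subtype, fun x y ↦ ?_,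
    fun x ↦ ?_⟩
  · ext
    change σ y • (x : B) = (t' x - σ x - t (π x)) • (y : B)
    have hx : (x : B) = σ x • 1 + π x := (decomp x).symm
    have hy : (y : B) = σ y • 1 + π y := (decomp y).symm
    set α := σ x
    set β := σ y
    set u := π x
    set v := π y
    clear_value α β u v
    set c := t' x - α - t u
    have hxy : (x : B) * y = (α * β) • 1 + α • (v : B) + β • (u : B) + t u • (v : B) := by
      rw [hx, hy, ← ht]
      simp only [add_mul, mul_add, smul_mul_assoc, mul_smul_comm, one_mul, mul_one]
      module
    have hM_comp : β • (u : B) - c • (v : B) = 0 := by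
      have h : β • (u : B) - c • (v : B) = (t' x * β - α * β) • 1 := by
        linear_combination (norm := module) ht' x y - hxy + t' x • hy
      have hmem : β • (u : B) - c • (v : B) ∈ M :=
        M.sub_mem (M.smul_mem _ u.2) (M.smul_mem _ v.2)
      rw [h] at hmem ⊢
      exact smul_one_eq_zero_of_disjoint hc.disjoint hmem
    have h : β • (x : B) - c • (y : B) = (β * α - c * β) • 1 := by
      linear_combination (norm := module) β • hx - c • hy + hM_comp
    have hmem : β • (x : B) - c • (y : B) ∈ M' :=
      M'.sub_mem (M'.smul_mem β x.2) (M'.smul_mem c y.2)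
    rw [h] at hmem
    exact sub_eq_zero.mp (h.trans (smul_one_eq_zero_of_disjoint hc'.disjoint hmem))
  · rw [LinearMap.comp_apply, Submodule.subtype_apply, ← eq_sub_iff_add_eq'.mpr (decomp x)]
    exact (π x).2

theorem le_of_modConstRank (hM : IsExceptionalSplitting R M) (hM' : IsExceptionalSplitting R M')
    {k : ℕ} (hrk : ModConstRank R M' k) (hk : 2 ≤ k) : M' ≤ M := by
  have hinj : Function.Injective (algebraMap R B) :=
    (injective_iff_map_eq_zero _).mpr fun r hr ↦
      hrk.eq_zero_of_smul_eq_zero (by omega) fun x ↦ Subtype.ext (by simp [Algebra.smul_def, hr])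
  obtain ⟨f, g, hfg, hf⟩ := exists_smul_eq_smul hinj hM hM'
  have hf0 : f = 0 := hrk.eq_zero_of_smul_eq_smul hk f g hfg
  intro x hx
  simpa [hf0] using hf ⟨x, hx⟩

end IsExceptionalSplitting

theorem stmt18_general (R B : Type) [CommRing R] [Ring B] [Algebra R B]
    (n : ℕ) (hn : 2 < n)
    (M M' : Submodule R B)
    (hMrk : ModConstRank R M (n - 1)) (hM'rk : ModConstRank R M' (n - 1))
    (hM : IsExceptionalSplitting R M) (hM' : IsExceptionalSplitting R M') :
    M = M' :=
  le_antisymm (hM'.le_of_modConstRank hM hMrk (by omega))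
    (hM.le_of_modConstRank hM' hM'rk (by omega))

/-- If `B` is an exceptional ring of constant rank `n > 2` over `R`, the splitting
`B = R ⊕ M` is unique: any two exceptional splittings (with `M` projective, of rank `n−1`)
coincide. -/
theorem stmt18 (R B : Type) [CommRing R] [IsNoetherianRing R] [Ring B] [Algebra R B]
    [Module.Finite R B] [Module.Projective R B]
    (hconn : ∀ e : R, IsIdempotentElem e → e = 0 ∨ e = 1)
    (n : ℕ) (hn : 2 < n) (hrank : ModConstRank R B n)
    (M M' : Submodule R B)
    (hMproj : Module.Projective R M) (hM'proj : Module.Projective R M')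
    (hMrk : ModConstRank R M (n - 1)) (hM'rk : ModConstRank R M' (n - 1))
    (hM : IsExceptionalSplitting R M) (hM' : IsExceptionalSplitting R M') :
    M = M' :=
  stmt18_general R B n hn M M' hMrk hM'rk hM hM'
end
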